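/- Let ι be a finite type, L : ι → Type a family of complete lattices, f : (∀ i, L i) → (∀ i, L i) monotone, and j ∈ ι. Let (a_i)_{i∈ι} be the least fixed point of f. Then the restriction of (a_i) to {i : i ≠ j} is a fixed point of the specialization Sp(f, j, a_j) of f at coordinate j with value a_j, and the least fixed point of Sp(f, j, a_j) is ≤ this restriction. -/
import Mathlib


/-- Least fixed point of `g` (Knaster-Tarski for monotone `g`). -/
def lfp {α : Type*} [CompleteLattice α] (g : α → α) : α := sInf {x | g x ≤ x}

/-- Extension of `x` by `a` at coordinate `j`. -/
def extendAt {ι : Type*} [DecidableEq ι] {L : ι → Type*} (j : ι) (a : L j)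
    (x : ∀ i : {i // i ≠ j}, L i.1) : ∀ i, L i :=
  fun i => if h : i = j then h ▸ a else x ⟨i, h⟩

/-- Specialization of `f` at coordinate `j` with value `a`. -/
def Sp {ι : Type*} [DecidableEq ι] {L : ι → Type*}
    (f : (∀ i, L i) → (∀ i, L i)) (j : ι) (a : L j)
    (x : ∀ i : {i // i ≠ j}, L i.1) : ∀ i : {i // i ≠ j}, L i.1 :=
  fun i => f (extendAt j a x) i.1

theorem lfp_le_of_prefixed {α : Type*} [CompleteLattice α] (g : α → α) {x : α}
    (hx : g x ≤ x) : lfp g ≤ x := sInf_le hx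

theorem lfp_fixed {α : Type*} [CompleteLattice α] {g : α → α} (hg : Monotone g) :
    g (lfp g) = lfp g := by
  have h1 : g (lfp g) ≤ lfp g := by
    apply le_sInf
    intro x hx
    exact le_trans (hg (sInf_le hx)) hx
  exact le_antisymm h1 (sInf_le (hg h1))

theorem sp_lfp_restrict {ι : Type*} [Finite ι] [DecidableEq ι] {L : ι → Type*}
    [∀ i, CompleteLattice (L i)]
    (f : (∀ i, L i) → (∀ i, L i)) (hf : Monotone f) (j : ι)
    (a : ∀ i, L i) (h : lfp f = a) :
    Sp f j (a j) (fun i : {i // i ≠ j} => a i.1) = (fun i : {i // i ≠ j} => a i.1) ∧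
    lfp (Sp f j (a j)) ≤ (fun i : {i // i ≠ j} => a i.1) := by
  have hfa : f a = a := h ▸ lfp_fixed hf
  have hext : extendAt j (a j) (fun i : {i // i ≠ j} => a i.1) = a := by
    funext i
    by_cases hi : i = j
    · subst hi; simp [extendAt]
    · simp [extendAt, hi]
  have hfix : Sp f j (a j) (fun i : {i // i ≠ j} => a i.1) = (fun i : {i // i ≠ j} => a i.1) := by
    funext i
    simp only [Sp, hext, hfa]
  exact ⟨hfix, lfp_le_of_prefixed _ (le_of_eq hfix)⟩
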